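/- arXiv:1902.09895 — 2 statements merged into one kernel-verified Lean document; each statement's English description precedes it below -/
import Mathlib

section
/- Let (A, →, ⇝, 1) be a pseudo-BCI algebra and let d : A → A be both a type I and a type II implicative derivation on A. If there exists a ∈ A such that a ≤ d(x) for all x ∈ A, then: (1) d is regular, i.e., d(1) = 1; (2) A is a pseudo-BCK algebra, i.e., x ≤ 1 for all x ∈ A. -/
/-- A pseudo-BCI algebra `(A, →, ⇝, 1)`: `ar` is `→`, `wa` is `⇝`, `one` is `1`. -/
structure PseudoBCI (A : Type*) where
  ar : A → A → A
  wa : A → A → A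
  one : A
  ax1 : ∀ x y z, wa (ar x y) (wa (ar y z) (ar x z)) = one
  ax2 : ∀ x y z, ar (wa x y) (ar (wa y z) (ar x z)) = one
  ax3 : ∀ x, ar one x = x
  ax4 : ∀ x, wa one x = x
  ax5 : ∀ x y, ar x y = one → ar y x = one → x = y

namespace PseudoBCI

variable {A : Type*}

/-- The order: `x ≤ y` iff `x → y = 1`. -/
def le (P : PseudoBCI A) (x y : A) : Prop := P.ar x y = P.one

/-- `x ∪₁ y = (x → y) ⇝ y`. -/
def cup1 (P : PseudoBCI A) (x y : A) : A := P.wa (P.ar x y) y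

/-- `x ∪₂ y = (x ⇝ y) → y`. -/
def cup2 (P : PseudoBCI A) (x y : A) : A := P.ar (P.wa x y) y

/-- `φ_x = (x → 1) ⇝ 1`. -/
def phi (P : PseudoBCI A) (x : A) : A := P.wa (P.ar x P.one) P.one

/-- `a` is an atom: `a ≤ x` implies `x = a`. -/
def IsAtom (P : PseudoBCI A) (a : A) : Prop := ∀ x, P.le a x → x = a

/-- `x ∈ K(A)` iff `x ≤ 1`. -/
def InK (P : PseudoBCI A) (x : A) : Prop := P.le x P.one

/-- Type I implicative derivation. -/
def IsIDerI (P : PseudoBCI A) (d : A → A) : Prop :=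
  (∀ x y, d (P.ar x y) = P.cup2 (P.ar x (d y)) (P.ar (d x) y)) ∧
  (∀ x y, d (P.wa x y) = P.cup1 (P.wa x (d y)) (P.wa (d x) y))

/-- Type II implicative derivation. -/
def IsIDerII (P : PseudoBCI A) (d : A → A) : Prop :=
  (∀ x y, d (P.ar x y) = P.cup2 (P.ar (d x) y) (P.ar x (d y))) ∧
  (∀ x y, d (P.wa x y) = P.cup1 (P.wa (d x) y) (P.wa x (d y)))

/-- Type I symmetric derivation. -/
def IsSDerI (P : PseudoBCI A) (d : A → A) : Prop :=
  (∀ x y, d (P.ar x y) = P.cup2 (P.ar x (d y)) (P.ar y (d x))) ∧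
  (∀ x y, d (P.wa x y) = P.cup1 (P.wa x (d y)) (P.wa y (d x)))

/-- Type II symmetric derivation. -/
def IsSDerII (P : PseudoBCI A) (d : A → A) : Prop :=
  (∀ x y, d (P.ar x y) = P.cup2 (P.ar (d x) y) (P.ar (d y) x)) ∧
  (∀ x y, d (P.wa x y) = P.cup1 (P.wa (d x) y) (P.wa (d y) x))

/-- Deductive system. -/
def IsDS (P : PseudoBCI A) (D : Set A) : Prop :=
  P.one ∈ D ∧ ∀ x y, x ∈ D → P.ar x y ∈ D → y ∈ D

/-- A is p-semisimple: `x ≤ 1` implies `x = 1`. -/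
def PSemisimple (P : PseudoBCI A) : Prop := ∀ x, P.le x P.one → x = P.one

end PseudoBCI

open PseudoBCI

namespace PseudoBCI

variable {A : Type*} (P : PseudoBCI A)

lemma ar_self' (x : A) : P.ar x x = P.one := by
  have h := P.ax2 P.one P.one x
  simp only [P.ax3, P.ax4] at h
  exact h

lemma I1' (x y : A) : P.wa x (P.wa (P.ar x y) y) = P.one := by
  have h := P.ax1 P.one x y
  simp only [P.ax3] at h
  exact h

lemma I2' (x y : A) : P.ar x (P.ar (P.wa x y) y) = P.one := by
  have h := P.ax2 P.one x y
  simp only [P.ax3, P.ax4] at h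
  exact h

lemma conv_rw' (x y : A) (h : P.ar x y = P.one) : P.wa x y = P.one := by
  have h1 := P.I1' x y
  rw [h, P.ax4] at h1
  exact h1

lemma conv_wr' (x y : A) (h : P.wa x y = P.one) : P.ar x y = P.one := by
  have h1 := P.I2' x y
  rw [h, P.ax3] at h1
  exact h1

lemma trans_r' (x y z : A) (hxy : P.ar x y = P.one) (hyz : P.ar y z = P.one) :
    P.ar x z = P.one := by
  have h := P.ax1 x y z
  rw [hxy, hyz] at h
  simp only [P.ax4] at h
  exact h

end PseudoBCI

theorem stmt7 {A : Type*} (P : PseudoBCI A) (d : A → A)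
    (hdI : P.IsIDerI d) (hdII : P.IsIDerII d)
    (a : A) (ha : ∀ x, P.le a (d x)) :
    d P.one = P.one ∧ ∀ x, P.le x P.one := by
  obtain ⟨hI1, _⟩ := hdI
  obtain ⟨hII1, _⟩ := hdII
  have ha' : ∀ x, P.ar a (d x) = P.one := ha
  -- F3 : d (a → x) = 1 for all x, by type I
  have F3 : ∀ x, d (P.ar a x) = P.one := by
    intro x
    have h := hI1 a x
    simp only [PseudoBCI.cup2] at h
    rw [ha' x, P.ax4, P.ar_self'] at h
    exact h
  -- d 1 = 1
  have hd1 : d P.one = P.one := by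
    have h := F3 a
    rw [P.ar_self'] at h
    exact h
  -- G : ((da → x) ⇝ 1) → 1 = 1, comparing type II with F3
  have G : ∀ x, P.ar (P.wa (P.ar (d a) x) P.one) P.one = P.one := by
    intro x
    have h := hII1 a x
    simp only [PseudoBCI.cup2] at h
    rw [ha' x, F3 x] at h
    exact h.symm
  -- F4 : (da → x) ≤ 1
  have F4 : ∀ x, P.ar (P.ar (d a) x) P.one = P.one := by
    intro x
    have h := P.I2' (P.ar (d a) x) P.one
    rw [G x] at h
    exact h
  -- da ≤ 1
  have hda1 : P.ar (d a) P.one = P.one := by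
    have h2 := P.conv_rw' _ _ (F4 P.one)
    have h3 := P.I1' (d a) P.one
    rw [h2] at h3
    exact P.conv_wr' _ _ h3
  refine ⟨hd1, fun x => ?_⟩
  -- x ≤ da → x since da ≤ 1
  have h := P.ax1 (d a) P.one x
  rw [hda1, P.ax4, P.ax3] at h
  have h' := P.conv_wr' _ _ h
  exact P.trans_r' _ _ _ h' (F4 x)
end

section
/- Let (A, →, ⇝, 1) be a p-semisimple pseudo-BCI algebra. Then the set of implicative derivations on A (maps that are both type I and type II implicative derivations) forms a commutative monoid under function composition with identity element the identity map: the identity map is an implicative derivation, the composition of two implicative derivations is an implicative derivation, and d₁ ∘ d₂ = d₂ ∘ d₁ for all implicative derivations d₁, d₂. -/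
open PseudoBCI

namespace PseudoBCIAux

open PseudoBCI

variable {A : Type*} (P : PseudoBCI A)

lemma refl_wa (x : A) : P.wa x x = P.one := by
  have h := P.ax1 P.one P.one x
  simpa [P.ax3, P.ax4] using h

lemma refl_ar (x : A) : P.ar x x = P.one := by
  have h := P.ax2 P.one P.one x
  simpa [P.ax3, P.ax4] using h

lemma lem1 (y z : A) : P.wa y (P.wa (P.ar y z) z) = P.one := by
  have h := P.ax1 P.one y z
  simpa [P.ax3] using h

lemma lem2 (y z : A) : P.ar y (P.ar (P.wa y z) z) = P.one := by
  have h := P.ax2 P.one y z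
  simpa [P.ax3, P.ax4] using h

lemma conv1 {x y : A} (h : P.ar x y = P.one) : P.wa x y = P.one := by
  have h1 := lem1 P x y
  rwa [h, P.ax4] at h1

lemma conv2 {x y : A} (h : P.wa x y = P.one) : P.ar x y = P.one := by
  have h1 := lem2 P x y
  rwa [h, P.ax3] at h1

variable (hss : P.PSemisimple)
include hss

lemma inj_ar {a b c : A} (h : P.ar a c = P.ar b c) : a = b := by
  have h1 := P.ax1 a b c
  rw [h, refl_wa] at h1
  have h2 := P.ax1 b a c
  rw [← h, refl_wa] at h2
  exact P.ax5 a b (hss _ (conv2 P h1)) (hss _ (conv2 P h2))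

/-- In a p-semisimple pseudo-BCI algebra, `x ≤ y` implies `x = y`. -/
lemma le_eq {a b : A} (h : P.ar a b = P.one) : a = b := by
  have h1 := P.ax1 a b a
  rw [h, P.ax4, refl_ar] at h1
  exact P.ax5 a b h (hss _ (conv2 P h1))

lemma cup1_id (x y : A) : P.cup1 x y = x := by
  show P.wa (P.ar x y) y = x
  set u := P.wa (P.ar x y) y with hu
  have s1 : P.ar x u = P.one := conv2 P (lem1 P x y)
  have s2 : P.ar (P.ar x y) (P.ar u y) = P.one := lem2 P (P.ar x y) y
  have s3 : P.ar (P.ar u y) (P.ar x y) = P.one := by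
    have h := P.ax1 x u y
    rw [s1, P.ax4] at h
    exact conv2 P h
  exact inj_ar P hss (P.ax5 _ _ s2 s3).symm

/-- In a p-semisimple pseudo-BCI algebra (with these axioms), the two arrows coincide. -/
lemma wa_eq_ar (x y : A) : P.wa x y = P.ar x y := by
  set u := P.ar (P.wa x y) y with hu
  have s1 : P.wa x u = P.one := conv1 P (lem2 P x y)
  have s2 : P.wa x y = P.wa u y := le_eq P hss (conv2 P (lem1 P (P.wa x y) y))
  have s3 : P.wa u y = P.ar x y := by
    have h := P.ax2 x u y
    rw [s1, P.ax3] at h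
    exact le_eq P hss h
  rw [s2, s3]

lemma cup2_id (x y : A) : P.cup2 x y = x := by
  show P.ar (P.wa x y) y = x
  rw [wa_eq_ar P hss, ← wa_eq_ar P hss (P.ar x y) y]
  exact cup1_id P hss x y

lemma exch (a b x : A) : P.ar a (P.wa b x) = P.wa b (P.ar a x) := by
  have h1 := P.ax1 a (P.wa b x) x
  have hc2 : P.ar (P.wa b x) x = b := cup2_id P hss b x
  rw [hc2] at h1
  exact le_eq P hss (conv2 P h1)

-- simplified derivation laws
lemma derI_ar {d : A → A} (hd : P.IsIDerI d) (x y : A) :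
    d (P.ar x y) = P.ar x (d y) := by rw [hd.1 x y, cup2_id P hss]

lemma derI_wa {d : A → A} (hd : P.IsIDerI d) (x y : A) :
    d (P.wa x y) = P.wa x (d y) := by rw [hd.2 x y, cup1_id P hss]

lemma derII_ar {d : A → A} (hd : P.IsIDerII d) (x y : A) :
    d (P.ar x y) = P.ar (d x) y := by rw [hd.1 x y, cup2_id P hss]

lemma derII_wa {d : A → A} (hd : P.IsIDerII d) (x y : A) :
    d (P.wa x y) = P.wa (d x) y := by rw [hd.2 x y, cup1_id P hss]

end PseudoBCIAux


theorem stmt15 {A : Type*} (P : PseudoBCI A) (hss : P.PSemisimple) :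
    (P.IsIDerI (id : A → A) ∧ P.IsIDerII (id : A → A)) ∧
    (∀ d1 d2 : A → A, P.IsIDerI d1 ∧ P.IsIDerII d1 → P.IsIDerI d2 ∧ P.IsIDerII d2 →
      P.IsIDerI (d1 ∘ d2) ∧ P.IsIDerII (d1 ∘ d2)) ∧
    (∀ d1 d2 : A → A, P.IsIDerI d1 ∧ P.IsIDerII d1 → P.IsIDerI d2 ∧ P.IsIDerII d2 →
      d1 ∘ d2 = d2 ∘ d1) := by
  refine ⟨⟨⟨fun x y => ?_, fun x y => ?_⟩, ⟨fun x y => ?_, fun x y => ?_⟩⟩, ?_, ?_⟩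
  · simp [PseudoBCIAux.cup2_id P hss]
  · simp [PseudoBCIAux.cup1_id P hss]
  · simp [PseudoBCIAux.cup2_id P hss]
  · simp [PseudoBCIAux.cup1_id P hss]
  · rintro d1 d2 ⟨h1I, h1II⟩ ⟨h2I, h2II⟩
    refine ⟨⟨fun x y => ?_, fun x y => ?_⟩, ⟨fun x y => ?_, fun x y => ?_⟩⟩
    · simp only [Function.comp_apply, PseudoBCIAux.cup2_id P hss,
        PseudoBCIAux.derI_ar P hss h2I, PseudoBCIAux.derI_ar P hss h1I]
    · simp only [Function.comp_apply, PseudoBCIAux.cup1_id P hss,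
        PseudoBCIAux.derI_wa P hss h2I, PseudoBCIAux.derI_wa P hss h1I]
    · simp only [Function.comp_apply, PseudoBCIAux.cup2_id P hss,
        PseudoBCIAux.derII_ar P hss h2II, PseudoBCIAux.derII_ar P hss h1II]
    · simp only [Function.comp_apply, PseudoBCIAux.cup1_id P hss,
        PseudoBCIAux.derII_wa P hss h2II, PseudoBCIAux.derII_wa P hss h1II]
  · rintro d1 d2 ⟨h1I, h1II⟩ ⟨h2I, h2II⟩
    funext x
    have e1 : d1 x = P.wa (d1 P.one) x := by
      conv_lhs => rw [← P.ax4 x, PseudoBCIAux.derII_wa P hss h1II]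
    have e2 : d2 x = P.ar (d2 P.one) x := by
      conv_lhs => rw [← P.ax3 x, PseudoBCIAux.derII_ar P hss h2II]
    calc (d1 ∘ d2) x = d1 (P.ar (d2 P.one) x) := by rw [Function.comp_apply, e2]
      _ = P.ar (d2 P.one) (d1 x) := PseudoBCIAux.derI_ar P hss h1I _ _
      _ = P.ar (d2 P.one) (P.wa (d1 P.one) x) := by rw [← e1]
      _ = P.wa (d1 P.one) (P.ar (d2 P.one) x) := PseudoBCIAux.exch P hss _ _ _
      _ = P.wa (d1 P.one) (d2 x) := by rw [← e2]
      _ = d2 (P.wa (d1 P.one) x) := (PseudoBCIAux.derI_wa P hss h2I _ _).symm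
      _ = (d2 ∘ d1) x := by rw [← e1, Function.comp_apply]
end
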